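/- arXiv:1904.01244 — 2 statements merged into one kernel-verified Lean document; each statement's English description precedes it below -/
import Mathlib

section
/- (Robust counterpart equivalence) Let Σ be an n×n real symmetric positive definite matrix, a ∈ ℝⁿ, β ≥ 0, and x ∈ ℝⁿ. Then ãᵀx ≤ 0 holds for all ã in the ellipsoidal uncertainty set U = {ã : (ã − a)ᵀΣ⁻¹(ã − a) ≤ β²} if and only if aᵀx + β√(xᵀΣx) ≤ 0. -/
/-!
Over the ellipsoid `uᵀ S⁻¹ u ≤ β²` the linear function `u ↦ uᵀ x` has maximum `β √(xᵀ S x)`.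
The upper bound is Cauchy–Schwarz for the positive semidefinite form `S⁻¹`, applied to `u` and
`S x` (note `uᵀ S⁻¹ (S x) = uᵀ x` and `(S x)ᵀ S⁻¹ (S x) = xᵀ S x`); it is attained at the
rescaled point `u = (β / √(xᵀ S x)) • S x`. Writing `ã = a + u` turns the robust constraint into
`aᵀ x + max_u uᵀ x ≤ 0`.
-/

open Matrix Real

namespace Matrix.PosDef

variable {ι : Type*} [Fintype ι] [DecidableEq ι]

theorem sq_dotProduct_le {K : Type*} [Field K] [LinearOrder K] [IsStrictOrderedRing K]
    [StarRing K] [TrivialStar K] {S : Matrix ι ι K} (hS : S.PosDef) (u x : ι → K) :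
    (u ⬝ᵥ x) ^ 2 ≤ (u ⬝ᵥ S⁻¹ *ᵥ u) * (x ⬝ᵥ S *ᵥ x) := by
  have hSymm : Sᵀ = S := by simpa using hS.isHermitian.eq
  have hInvMul : S⁻¹ * S = 1 := nonsing_inv_mul S ((isUnit_iff_isUnit_det S).mp hS.isUnit)
  have cs := (toBilin' S⁻¹).apply_mul_apply_le_of_forall_zero_le
    (fun v ↦ by simpa [toBilin'_apply'] using hS.inv.posSemidef.dotProduct_mulVec_nonneg v)
    u (S *ᵥ x)
  simp only [toBilin'_apply'] at cs
  rwa [mulVec_mulVec, hInvMul, one_mulVec, dotProduct_mulVec, ← mulVec_transpose,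
    transpose_nonsing_inv, hSymm, mulVec_mulVec, hInvMul, one_mulVec, dotProduct_comm x u, ← sq,
    dotProduct_comm (S *ᵥ x)] at cs

variable {S : Matrix ι ι ℝ}

theorem dotProduct_le_of_dotProduct_inv_mulVec_le (hS : S.PosDef) {β : ℝ} (hβ : 0 ≤ β)
    {u : ι → ℝ} (hu : u ⬝ᵥ S⁻¹ *ᵥ u ≤ β ^ 2) (x : ι → ℝ) :
    u ⬝ᵥ x ≤ β * √(x ⬝ᵥ S *ᵥ x) := by
  have hq : 0 ≤ x ⬝ᵥ S *ᵥ x := by simpa using hS.posSemidef.dotProduct_mulVec_nonneg x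
  have hsq : (u ⬝ᵥ x) ^ 2 ≤ β ^ 2 * (x ⬝ᵥ S *ᵥ x) :=
    (hS.sq_dotProduct_le u x).trans (mul_le_mul_of_nonneg_right hu hq)
  calc u ⬝ᵥ x ≤ |u ⬝ᵥ x| := le_abs_self _
    _ ≤ √(β ^ 2 * (x ⬝ᵥ S *ᵥ x)) := Real.abs_le_sqrt hsq
    _ = β * √(x ⬝ᵥ S *ᵥ x) := by rw [Real.sqrt_mul' _ hq, Real.sqrt_sq hβ]

theorem exists_dotProduct_inv_mulVec_le_and_dotProduct_eq (hS : S.PosDef) (β : ℝ)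
    (x : ι → ℝ) :
    ∃ u : ι → ℝ, u ⬝ᵥ S⁻¹ *ᵥ u ≤ β ^ 2 ∧ u ⬝ᵥ x = β * √(x ⬝ᵥ S *ᵥ x) := by
  set q := x ⬝ᵥ S *ᵥ x
  -- For `x = 0` the scalar is `β / √0 = 0`, so no case split is needed.
  set c := β / √q
  have hInvMulVec : S⁻¹ *ᵥ S *ᵥ x = x := by
    rw [mulVec_mulVec, nonsing_inv_mul S ((isUnit_iff_isUnit_det S).mp hS.isUnit), one_mulVec]
  have hcq : c * q = β * √q := by rw [div_mul_eq_mul_div, mul_div_assoc, Real.div_sqrt]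
  refine ⟨c • S *ᵥ x, ?_, ?_⟩
  · calc c • S *ᵥ x ⬝ᵥ S⁻¹ *ᵥ c • S *ᵥ x = c * (c * q) := by
          rw [mulVec_smul, hInvMulVec, smul_dotProduct, dotProduct_smul, dotProduct_comm,
            smul_eq_mul, smul_eq_mul]
      _ = β ^ 2 * (√q / √q) := by rw [hcq]; ring
      _ ≤ β ^ 2 := mul_le_of_le_one_right (sq_nonneg β) (div_self_le_one _)
  · rw [smul_dotProduct, dotProduct_comm, smul_eq_mul, hcq]

end Matrix.PosDef

/-- Robust counterpart equivalence: `ãᵀx ≤ 0` for all `ã` in the ellipsoid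
`U = {ã : (ã − a)ᵀ Σ⁻¹ (ã − a) ≤ β²}` iff `aᵀx + β √(xᵀ Σ x) ≤ 0`. -/
theorem robust_counterpart_equivalence {n : ℕ} (S : Matrix (Fin n) (Fin n) ℝ)
    (hS : S.PosDef) (a : Fin n → ℝ) (β : ℝ) (hβ : 0 ≤ β) (x : Fin n → ℝ) :
    (∀ atilde : Fin n → ℝ, (atilde - a) ⬝ᵥ (S⁻¹ *ᵥ (atilde - a)) ≤ β ^ 2 → atilde ⬝ᵥ x ≤ 0)
      ↔ a ⬝ᵥ x + β * Real.sqrt (x ⬝ᵥ (S *ᵥ x)) ≤ 0 := by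
  constructor
  · intro h
    obtain ⟨u, hu, hux⟩ := hS.exists_dotProduct_inv_mulVec_le_and_dotProduct_eq β x
    have hworst := h (a + u) (by rwa [add_sub_cancel_left])
    rwa [add_dotProduct, hux] at hworst
  · intro h atilde hmem
    have hdev := hS.dotProduct_le_of_dotProduct_inv_mulVec_le hβ hmem x
    rw [sub_dotProduct] at hdev
    linarith
end

section
/- (Validity of the cuts) Let Σ be an n×n real symmetric positive semidefinite matrix, a ∈ ℝⁿ, β ≥ 0, and let x_ν ∈ ℝⁿ satisfy x_νᵀΣx_ν > 0. Define the cut vector â = a + βΣx_ν/√(x_νᵀΣx_ν). Then every x ∈ ℝⁿ satisfying the robust counterpart constraint aᵀx + β√(xᵀΣx) ≤ 0 also satisfies the cut âᵀx ≤ 0. -/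
/-!
Write `q = √(xνᵀ S xν)`. Since `S` is symmetric, `âᵀx = aᵀx + (β / q) · xνᵀ S x`, and the
Cauchy–Schwarz inequality for the semi-inner product `(u, v) ↦ uᵀ S v` gives
`xνᵀ S x ≤ q · √(xᵀ S x)`. Hence `âᵀx ≤ aᵀx + β √(xᵀ S x) = g(x)`: the cut is a linear
minorant of the robust constraint function, so it holds wherever `g ≤ 0`.
-/

open Matrix Real

namespace Matrix.PosSemidef

variable {ι : Type*} [Fintype ι] {S : Matrix ι ι ℝ}

theorem mulVec_dotProduct_comm (hS : S.PosSemidef) (u v : ι → ℝ) :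
    (S *ᵥ u) ⬝ᵥ v = u ⬝ᵥ (S *ᵥ v) := by
  have hST : Sᵀ = S := isHermitian_iff_isSymm.mp hS.isHermitian
  rw [dotProduct_comm, ← dotProduct_transpose_mulVec, hST]

theorem dotProduct_mulVec_sq_le (hS : S.PosSemidef) (u v : ι → ℝ) :
    (u ⬝ᵥ (S *ᵥ v)) ^ 2 ≤ (u ⬝ᵥ (S *ᵥ u)) * (v ⬝ᵥ (S *ᵥ v)) := by
  classical
  have := (toBilin' S).apply_mul_apply_le_of_forall_zero_le
    (fun w ↦ by simpa [toBilin'_apply'] using hS.dotProduct_mulVec_nonneg w) u v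
  simpa only [toBilin'_apply', ← hS.mulVec_dotProduct_comm v u, dotProduct_comm _ u, sq] using this

theorem dotProduct_mulVec_le_sqrt_mul_sqrt (hS : S.PosSemidef) (u v : ι → ℝ) :
    u ⬝ᵥ (S *ᵥ v) ≤ √(u ⬝ᵥ (S *ᵥ u)) * √(v ⬝ᵥ (S *ᵥ v)) := by
  rw [← sqrt_mul (by simpa using hS.dotProduct_mulVec_nonneg u)]
  exact le_sqrt_of_sq_le (hS.dotProduct_mulVec_sq_le u v)

theorem cut_dotProduct_le (hS : S.PosSemidef) (a : ι → ℝ) {β : ℝ} (hβ : 0 ≤ β)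
    (y x : ι → ℝ) :
    (a + (β / √(y ⬝ᵥ (S *ᵥ y))) • (S *ᵥ y)) ⬝ᵥ x ≤ a ⬝ᵥ x + β * √(x ⬝ᵥ (S *ᵥ x)) := by
  set q := √(y ⬝ᵥ (S *ᵥ y))
  set r := √(x ⬝ᵥ (S *ᵥ x))
  have hq : 0 ≤ q := sqrt_nonneg _
  have hr : 0 ≤ r := sqrt_nonneg _
  -- `β / q * q ≤ β` also covers `q = 0`, where `β / q = 0`.
  have hβq : β / q * q ≤ β := by
    rcases hq.eq_or_lt with hq0 | hq0
    · simp [← hq0, hβ]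
    · rw [div_mul_cancel₀ _ hq0.ne']
  calc (a + (β / q) • (S *ᵥ y)) ⬝ᵥ x
      = a ⬝ᵥ x + β / q * (y ⬝ᵥ (S *ᵥ x)) := by
        rw [add_dotProduct, smul_dotProduct, hS.mulVec_dotProduct_comm, smul_eq_mul]
    _ ≤ a ⬝ᵥ x + β / q * (q * r) := by
        gcongr
        exact hS.dotProduct_mulVec_le_sqrt_mul_sqrt y x
    _ ≤ a ⬝ᵥ x + β * r := by
        rw [← mul_assoc]
        gcongr

end Matrix.PosSemidef

theorem cut_validity_general {n : ℕ} (S : Matrix (Fin n) (Fin n) ℝ)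
    (hS : S.PosSemidef) (a : Fin n → ℝ) (β : ℝ) (hβ : 0 ≤ β)
    (xν : Fin n → ℝ) (x : Fin n → ℝ)
    (hx : a ⬝ᵥ x + β * Real.sqrt (x ⬝ᵥ (S *ᵥ x)) ≤ 0) :
    (a + (β / Real.sqrt (xν ⬝ᵥ (S *ᵥ xν))) • (S *ᵥ xν)) ⬝ᵥ x ≤ 0 :=
  (hS.cut_dotProduct_le a hβ xν x).trans hx

/-- Validity of the cuts: every `x` feasible for the robust counterpart
constraint `aᵀx + β √(xᵀ S x) ≤ 0` also satisfies the cut `âᵀx ≤ 0` generated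
at any point `xν` with `xνᵀ S xν > 0`. -/
theorem cut_validity {n : ℕ} (S : Matrix (Fin n) (Fin n) ℝ)
    (hS : S.PosSemidef) (a : Fin n → ℝ) (β : ℝ) (hβ : 0 ≤ β)
    (xν : Fin n → ℝ) (hxν : 0 < xν ⬝ᵥ (S *ᵥ xν)) (x : Fin n → ℝ)
    (hx : a ⬝ᵥ x + β * Real.sqrt (x ⬝ᵥ (S *ᵥ x)) ≤ 0) :
    (a + (β / Real.sqrt (xν ⬝ᵥ (S *ᵥ xν))) • (S *ᵥ xν)) ⬝ᵥ x ≤ 0 :=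
  cut_validity_general S hS a β hβ xν x hx
end
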